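/- For 2 ≤ k ≤ n−1 and any real number M, there exists μ = (μ_1,…,μ_n) ∈ ℝ^n such that σ_k(μ) = M and σ_{k-1}(μ|i) > 0 for every i = 1,…,n. -/
import Mathlib


open Finset

noncomputable def esym {n : ℕ} (s : Finset (Fin n)) (μ : Fin n → ℝ) (k : ℕ) : ℝ :=
  ∑ t ∈ s.powersetCard k, ∏ j ∈ t, μ j

lemma esym_const {n : ℕ} (s : Finset (Fin n)) (μ : Fin n → ℝ) (c : ℝ) (m : ℕ)
    (h : ∀ j ∈ s, μ j = c) : esym s μ m = (s.card.choose m : ℝ) * c ^ m := by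
  unfold esym
  rw [Finset.sum_congr rfl (fun t ht => ?_), Finset.sum_const, Finset.card_powersetCard,
    nsmul_eq_mul]
  rw [Finset.mem_powersetCard] at ht
  rw [Finset.prod_congr rfl (fun j hj => h j (ht.1 hj)), Finset.prod_const, ht.2]

lemma esym_insert {n : ℕ} (a : Fin n) (s : Finset (Fin n)) (ha : a ∉ s) (μ : Fin n → ℝ) (m : ℕ) :
    esym (insert a s) μ (m + 1) = μ a * esym s μ m + esym s μ (m + 1) := by
  unfold esym
  have hdisj : Disjoint (s.powersetCard (m + 1)) ((s.powersetCard m).image (insert a)) := by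
    rw [Finset.disjoint_left]
    intro u hu hu'
    rw [Finset.mem_powersetCard] at hu
    rw [Finset.mem_image] at hu'
    obtain ⟨t, _, rfl⟩ := hu'
    exact ha (hu.1 (Finset.mem_insert_self a t))
  have hinj : ∀ t ∈ s.powersetCard m, ∀ t' ∈ s.powersetCard m,
      insert a t = insert a t' → t = t' := by
    intro t ht t' ht' h
    rw [Finset.mem_powersetCard] at ht ht'
    have h1 : a ∉ t := fun hh => ha (ht.1 hh)
    have h2 : a ∉ t' := fun hh => ha (ht'.1 hh)
    rw [← Finset.erase_insert h1, ← Finset.erase_insert h2, h]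
  rw [Finset.powersetCard_succ_insert ha, Finset.sum_union hdisj, Finset.sum_image hinj,
    add_comm]
  congr 1
  rw [Finset.mul_sum]
  refine Finset.sum_congr rfl fun t ht => ?_
  rw [Finset.mem_powersetCard] at ht
  rw [Finset.prod_insert (fun h => ha (ht.1 h))]

set_option maxHeartbeats 1000000 in
theorem stmt9 (n k : ℕ) (hn : 3 ≤ n) (hk : 2 ≤ k) (hkn : k ≤ n - 1) (M : ℝ) :
    ∃ μ : Fin n → ℝ, esym Finset.univ μ k = M ∧
      ∀ i : Fin n, 0 < esym (Finset.univ.erase i) μ (k - 1) := by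
  obtain ⟨m, rfl⟩ : ∃ m, k = m + 2 := ⟨k - 2, by omega⟩
  have hn0 : 0 < n := by omega
  set i₀ : Fin n := ⟨0, hn0⟩ with hi₀
  set a : ℝ := (Nat.choose (n-1) (m+1) : ℝ) with ha_def
  set b : ℝ := (Nat.choose (n-1) (m+2) : ℝ) with hb_def
  set c : ℝ := (Nat.choose (n-2) m : ℝ) with hc_def
  set d : ℝ := (Nat.choose (n-2) (m+1) : ℝ) with hd_def
  have ha : 0 < a := by
    rw [ha_def]; exact_mod_cast Nat.choose_pos (show m + 1 ≤ n - 1 by omega)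
  have hb : 0 < b := by
    rw [hb_def]; exact_mod_cast Nat.choose_pos (show m + 2 ≤ n - 1 by omega)
  have hc : 0 < c := by
    rw [hc_def]; exact_mod_cast Nat.choose_pos (show m ≤ n - 2 by omega)
  have hd : 0 < d := by
    rw [hd_def]; exact_mod_cast Nat.choose_pos (show m + 1 ≤ n - 2 by omega)
  -- key binomial identities
  have h1n : Nat.choose (n-1) (m+2) * (m+2) = Nat.choose (n-1) (m+1) * (n - (m+2)) := by
    have := Nat.choose_succ_right_eq (n-1) (m+1)
    have he : n - 1 - (m+1) = n - (m+2) := by omega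
    rw [he] at this
    exact this
  have h2n : Nat.choose (n-2) (m+1) * (m+1) = Nat.choose (n-2) m * (n - (m+2)) := by
    have := Nat.choose_succ_right_eq (n-2) m
    have he : n - 2 - m = n - (m+2) := by omega
    rw [he] at this
    exact this
  have hE : (1:ℝ) ≤ ((n - (m+2) : ℕ) : ℝ) := by
    have : 1 ≤ n - (m+2) := by omega
    exact_mod_cast this
  have h1R : b * (m+2 : ℝ) = a * ((n - (m+2) : ℕ) : ℝ) := by
    rw [ha_def, hb_def]; exact_mod_cast h1n
  have h2R : d * (m+1 : ℝ) = c * ((n - (m+2) : ℕ) : ℝ) := by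
    rw [hc_def, hd_def]; exact_mod_cast h2n
  have hDpos : 0 < d * a - c * b := by
    set E : ℝ := ((n - (m+2) : ℕ) : ℝ) with hE_def
    have hm1 : (0:ℝ) < (m+1 : ℝ) := by positivity
    have hm2 : (0:ℝ) < (m+2 : ℝ) := by positivity
    have e1 : d * a * ((m+1:ℝ) * (m+2:ℝ)) = c * E * a * (m+2:ℝ) := by
      linear_combination (a * ((m:ℝ)+2)) * h2R
    have e2 : c * b * ((m+1:ℝ) * (m+2:ℝ)) = c * a * E * (m+1:ℝ) := by
      linear_combination (c * ((m:ℝ)+1)) * h1R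
    nlinarith [e1, e2, mul_pos (mul_pos hc ha) (lt_of_lt_of_le one_pos hE),
      mul_pos hm1 hm2]
  set t : ℝ := max 1 ((c * |M| + 1) / (d * a - c * b)) with ht_def
  have ht1 : (1:ℝ) ≤ t := le_max_left _ _
  have ht0 : (0:ℝ) < t := lt_of_lt_of_le one_pos ht1
  have htk : c * |M| + 1 ≤ (d * a - c * b) * t ^ (m+2) := by
    have h' : (c * |M| + 1) / (d * a - c * b) ≤ t := le_max_right _ _
    rw [div_le_iff₀ hDpos] at h'
    have htt : t ≤ t ^ (m+2) := le_self_pow₀ (by linarith) (by omega)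
    nlinarith
  have hA : 0 < a * t ^ (m+1) := by positivity
  set x : ℝ := (M - b * t ^ (m+2)) / (a * t ^ (m+1)) with hx_def
  have hx : x * (a * t ^ (m+1)) = M - b * t ^ (m+2) := div_mul_cancel₀ _ (ne_of_gt hA)
  set μ : Fin n → ℝ := fun i => if i = i₀ then x else t with hμ_def
  have hμt : ∀ j : Fin n, j ≠ i₀ → μ j = t := fun j hj => if_neg hj
  have hμ0 : μ i₀ = x := if_pos rfl
  have hcard1 : (Finset.univ.erase i₀).card = n - 1 := by
    rw [Finset.card_erase_of_mem (Finset.mem_univ _), Finset.card_univ, Fintype.card_fin]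
  have e1 : ∀ j, esym (Finset.univ.erase i₀) μ j = (Nat.choose (n-1) j : ℝ) * t ^ j := by
    intro j
    rw [esym_const _ _ t j (fun p hp => hμt p (Finset.ne_of_mem_erase hp)), hcard1]
  refine ⟨μ, ?_, ?_⟩
  · -- esym univ μ (m+2) = M
    have etot : esym Finset.univ μ (m+2)
        = μ i₀ * esym (Finset.univ.erase i₀) μ (m+1)
          + esym (Finset.univ.erase i₀) μ (m+2) := by
      have h := esym_insert i₀ (Finset.univ.erase i₀) (Finset.notMem_erase _ _) μ (m+1)
      rw [Finset.insert_erase (Finset.mem_univ i₀)] at h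
      exact h
    rw [etot, hμ0, e1, e1, ← ha_def, ← hb_def]
    nlinarith [hx]
  · intro i
    show 0 < esym (Finset.univ.erase i) μ (m+1)
    by_cases hi : i = i₀
    · subst hi
      rw [e1, ← ha_def]
      positivity
    · have hi₀mem : i₀ ∈ Finset.univ.erase i :=
        Finset.mem_erase.mpr ⟨fun h => hi h.symm, Finset.mem_univ _⟩
      have hcard2 : ((Finset.univ.erase i).erase i₀).card = n - 2 := by
        rw [Finset.card_erase_of_mem hi₀mem,
          Finset.card_erase_of_mem (Finset.mem_univ _), Finset.card_univ, Fintype.card_fin]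
        omega
      have e2 : ∀ j, esym ((Finset.univ.erase i).erase i₀) μ j
          = (Nat.choose (n-2) j : ℝ) * t ^ j := by
        intro j
        rw [esym_const _ _ t j (fun p hp => hμt p (Finset.ne_of_mem_erase hp)), hcard2]
      have hrec : esym (Finset.univ.erase i) μ (m+1)
          = μ i₀ * esym ((Finset.univ.erase i).erase i₀) μ m
            + esym ((Finset.univ.erase i).erase i₀) μ (m+1) := by
        have h := esym_insert i₀ ((Finset.univ.erase i).erase i₀)
          (Finset.notMem_erase _ _) μ m
        rw [Finset.insert_erase hi₀mem] at h
        exact h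
      rw [hrec, hμ0, e2, e2, ← hc_def, ← hd_def]
      -- goal: 0 < x * (c * t^m) + d * t^(m+1)
      have h2 : (x * (c * t ^ m) + d * t ^ (m+1)) * (a * t ^ (m+1))
          = c * t ^ m * (x * (a * t ^ (m+1))) + d * a * (t ^ m * t ^ (m+2)) := by ring
      rw [hx] at h2
      have hnum : 0 < c * t ^ m * (M - b * t ^ (m+2)) + d * a * (t ^ m * t ^ (m+2)) := by
        have hcM : -(c * |M|) ≤ c * M := by
          have h := neg_abs_le M
          nlinarith
        have hcm : (1:ℝ) ≤ c * M + (d * a - c * b) * t ^ (m+2) := by linarith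
        have htm : (0:ℝ) < t ^ m := by positivity
        have htm1 : (1:ℝ) ≤ t ^ m := one_le_pow₀ ht1
        calc (0:ℝ) < t ^ m * (c * M + (d * a - c * b) * t ^ (m+2)) := by nlinarith
          _ = c * t ^ m * (M - b * t ^ (m+2)) + d * a * (t ^ m * t ^ (m+2)) := by ring
      nlinarith [hnum, h2, hA]
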